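/- Let X be a topological space, f : 𝕋 × X → GLₙ(ℂ) continuous such that for each x ∈ X the function f(·,x) admits a canonical factorization that can be chosen continuously in x on a neighborhood of each point (local continuous canonical factorizations). Then there is a unique continuous map fᵉ : 𝔻² × X → GLₙ(ℂ) extending f such that on each neighborhood U with continuous factorization f = f₋ f₊, fᵉ(z,x) = f₋ᵉ(z̄⁻¹,x) f₊ᵉ(z,x). -/

import Mathlib

open Metric

/-- A canonical (right) factorization `f = f₋ f₊` of a nonsingular matrix function on the
unit circle.  The factor `f₊` extends continuously and invertibly to the closed unit disk,
analytically on the open disk; the factor `f₋` extends continuously and invertibly to the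
closed exterior disk including `∞`.  We encode the exterior extension `f₋ᵉ` via the map
`Fm : 𝔻² → GLₙ(ℂ)`, `Fm w = f₋ᵉ(w⁻¹)` (so `Fm 0 = f₋ᵉ(∞)`), which is continuous on the
closed unit disk, analytic on the open disk, and invertible-valued. -/
structure CanonicalFactorization (n : ℕ) (f : ℂ → Matrix (Fin n) (Fin n) ℂ) : Type where
  Fm : ℂ → Matrix (Fin n) (Fin n) ℂ
  Fp : ℂ → Matrix (Fin n) (Fin n) ℂ
  contOn_m : ContinuousOn Fm (closedBall 0 1)
  contOn_p : ContinuousOn Fp (closedBall 0 1)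
  anal_m : ∀ i j, DifferentiableOn ℂ (fun z => Fm z i j) (ball 0 1)
  anal_p : ∀ i j, DifferentiableOn ℂ (fun z => Fp z i j) (ball 0 1)
  unit_m : ∀ z ∈ closedBall (0 : ℂ) 1, IsUnit (Fm z)
  unit_p : ∀ z ∈ closedBall (0 : ℂ) 1, IsUnit (Fp z)
  factor : ∀ z ∈ sphere (0 : ℂ) 1, f z = Fm z⁻¹ * Fp z

/-!
Two canonical factorizations `f = f₋ f₊ = f₋' f₊'` of the same loop differ by a constant matrix:
`(f₋')⁻¹ f₋` is holomorphic outside the circle, `f₊' f₊⁻¹` inside, and they agree on the circle.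
After reflecting in the circle, each entry gives functions `u`, `v` holomorphic on the disk with
`u(z̄) = v(z)` on the circle; then `u + conj ∘ v ∘ conj` and `i (u - conj ∘ v ∘ conj)` are real on
the circle, hence (maximum principle for `exp (± i ·)`, then the open mapping theorem) constant.
So `f₋ᵉ(z̄⁻¹) f₊ᵉ(z)` does not depend on the factorization, and the local continuous extensions
glue to a global one.
-/

open Set ComplexConjugate

section DiffContOnClAlgebra

variable {𝕜 : Type*} [NontriviallyNormedField 𝕜] {s : Set 𝕜}

theorem DiffContOnCl.fun_sum {ι : Type*} {t : Finset ι} {g : ι → 𝕜 → 𝕜}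
    (hg : ∀ i ∈ t, DiffContOnCl 𝕜 (g i) s) : DiffContOnCl 𝕜 (fun z => ∑ i ∈ t, g i z) s :=
  ⟨.fun_sum fun i hi => (hg i hi).differentiableOn,
    continuousOn_finsetSum _ fun i hi => (hg i hi).continuousOn⟩

theorem DiffContOnCl.fun_prod {ι : Type*} {t : Finset ι} {g : ι → 𝕜 → 𝕜}
    (hg : ∀ i ∈ t, DiffContOnCl 𝕜 (g i) s) : DiffContOnCl 𝕜 (fun z => ∏ i ∈ t, g i z) s :=
  ⟨.fun_finsetProd fun i hi => (hg i hi).differentiableOn,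
    continuousOn_finsetProd _ fun i hi => (hg i hi).continuousOn⟩

theorem DiffContOnCl.fun_mul {g h : 𝕜 → 𝕜} (hg : DiffContOnCl 𝕜 g s) (hh : DiffContOnCl 𝕜 h s) :
    DiffContOnCl 𝕜 (fun z => g z * h z) s :=
  hg.smul hh

variable {ι : Type*} [Fintype ι] {M N : 𝕜 → Matrix ι ι 𝕜}

theorem diffContOnCl_mul_apply (hM : ∀ i j, DiffContOnCl 𝕜 (fun z => M z i j) s)
    (hN : ∀ i j, DiffContOnCl 𝕜 (fun z => N z i j) s) (i j : ι) :
    DiffContOnCl 𝕜 (fun z => (M z * N z) i j) s := by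
  simp_rw [Matrix.mul_apply]
  exact .fun_sum fun k _ => (hM i k).fun_mul (hN k j)

variable [DecidableEq ι]

theorem diffContOnCl_det (hM : ∀ i j, DiffContOnCl 𝕜 (fun z => M z i j) s) :
    DiffContOnCl 𝕜 (fun z => (M z).det) s := by
  simp_rw [Matrix.det_apply']
  exact .fun_sum fun σ _ => diffContOnCl_const.fun_mul (.fun_prod fun i _ => hM (σ i) i)

theorem diffContOnCl_adjugate_apply (hM : ∀ i j, DiffContOnCl 𝕜 (fun z => M z i j) s) (i j : ι) :
    DiffContOnCl 𝕜 (fun z => (M z).adjugate i j) s := by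
  simp_rw [Matrix.adjugate_apply]
  refine diffContOnCl_det fun k l => ?_
  rcases eq_or_ne k j with rfl | hkj
  · simpa using diffContOnCl_const
  · simpa [Matrix.updateRow_ne hkj] using hM k l

theorem diffContOnCl_inv_apply (hM : ∀ i j, DiffContOnCl 𝕜 (fun z => M z i j) s)
    (hdet : ∀ z ∈ closure s, (M z).det ≠ 0) (i j : ι) :
    DiffContOnCl 𝕜 (fun z => (M z)⁻¹ i j) s := by
  simp_rw [Matrix.inv_def, Ring.inverse_eq_inv', Matrix.smul_apply, smul_eq_mul]
  exact ((diffContOnCl_det hM).inv hdet).fun_mul (diffContOnCl_adjugate_apply hM i j)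

end DiffContOnClAlgebra

theorem DiffContOnCl.im_eq_zero_of_im_eq_zero_on_frontier {F : ℂ → ℂ} {U : Set ℂ}
    (hF : DiffContOnCl ℂ F U) (hU : Bornology.IsBounded U)
    (h : ∀ z ∈ frontier U, (F z).im = 0) {z : ℂ} (hz : z ∈ closure U) : (F z).im = 0 := by
  -- maximum modulus for `exp (± i F)`, whose modulus is `exp (∓ Im F)`
  have bound (σ : ℂ) (hσ : σ.re = 0) : ‖Complex.exp (σ * F z)‖ ≤ 1 := by
    refine Complex.norm_le_of_forall_mem_frontier_norm_le hU
      ((Complex.differentiable_exp.comp (differentiable_id.const_mul σ)).comp_diffContOnCl hF)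
      (fun w hw => ?_) hz
    simp [Complex.norm_exp, hσ, h w hw]
  have h₁ := bound Complex.I (by simp)
  have h₂ := bound (-Complex.I) (by simp)
  simp only [Complex.norm_exp, Real.exp_le_one_iff, Complex.mul_re, Complex.I_re, Complex.I_im,
    Complex.neg_re, Complex.neg_im] at h₁ h₂
  linarith

theorem DiffContOnCl.exists_eqOn_const_of_im_eq_zero_on_frontier {F : ℂ → ℂ} {U : Set ℂ}
    (hF : DiffContOnCl ℂ F U) (hb : Bornology.IsBounded U) (ho : IsOpen U) (hc : IsConnected U)
    (h : ∀ z ∈ frontier U, (F z).im = 0) : ∃ c, EqOn F (fun _ => c) (closure U) := by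
  obtain ⟨c, hFc⟩ := (hF.differentiableOn.analyticOnNhd ho).eq_const_of_im_eq_const (c₀ := 0)
    (fun z hz => hF.im_eq_zero_of_im_eq_zero_on_frontier hb h (subset_closure hz)) ho hc
  exact ⟨c, EqOn.of_subset_closure hFc hF.continuousOn continuousOn_const subset_closure
    subset_rfl⟩

theorem DiffContOnCl.conj_conj {f : ℂ → ℂ} {r : ℝ} (hf : DiffContOnCl ℂ f (ball 0 r)) :
    DiffContOnCl ℂ (conj ∘ f ∘ conj) (ball 0 r) := by
  have hmaps : MapsTo conj (ball (0 : ℂ) r) (ball 0 r) := fun z hz => by simpa using hz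
  refine ⟨fun z hz => ?_, Complex.continuous_conj.comp_continuousOn <| hf.continuousOn.comp
    Complex.continuous_conj.continuousOn (hmaps.closure Complex.continuous_conj)⟩
  simpa using ((hf.differentiableAt isOpen_ball (hmaps hz)).conj_conj).differentiableWithinAt

theorem exists_eqOn_const_of_conj_reflection {u v : ℂ → ℂ} (hu : DiffContOnCl ℂ u (ball 0 1))
    (hv : DiffContOnCl ℂ v (ball 0 1)) (h : ∀ z ∈ sphere (0 : ℂ) 1, u (conj z) = v z) :
    ∃ c, EqOn u (fun _ => c) (closedBall 0 1) := by
  -- `B = conj ∘ u` on the circle, so the holomorphic `u + B` and `i (u - B)` are real there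
  set B := conj ∘ v ∘ conj
  have hvu : ∀ z ∈ frontier (ball (0 : ℂ) 1), v (conj z) = u z := by
    intro z hz
    rw [frontier_ball 0 one_ne_zero] at hz
    simpa using (h (conj z) (by simpa using hz)).symm
  have hreal {F : ℂ → ℂ} (hF : DiffContOnCl ℂ F (ball 0 1))
      (hFr : ∀ z ∈ frontier (ball (0 : ℂ) 1), (F z).im = 0) :
      ∃ c, EqOn F (fun _ => c) (closedBall 0 1) := by
    simpa [closure_ball (0 : ℂ) one_ne_zero] using hF.exists_eqOn_const_of_im_eq_zero_on_frontier
      isBounded_ball isOpen_ball (isConnected_ball one_pos) hFr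
  obtain ⟨c₁, hc₁⟩ := hreal (hu.add hv.conj_conj) fun z hz => by simp [hvu z hz]
  obtain ⟨c₂, hc₂⟩ := hreal ((hu.sub hv.conj_conj).const_smul Complex.I) fun z hz => by
    simp [hvu z hz]
  refine ⟨(c₁ - Complex.I * c₂) / 2, fun z hz => ?_⟩
  have e₁ : u z + B z = c₁ := hc₁ hz
  have e₂ : Complex.I * (u z - B z) = c₂ := hc₂ hz
  linear_combination (e₁ - Complex.I * e₂) / 2 + (u z - B z) / 2 * Complex.I_sq

theorem eq_of_conj_reflection {u v : ℂ → ℂ} (hu : DiffContOnCl ℂ u (ball 0 1))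
    (hv : DiffContOnCl ℂ v (ball 0 1)) (h : ∀ z ∈ sphere (0 : ℂ) 1, u (conj z) = v z)
    {z w : ℂ} (hz : z ∈ closedBall 0 1) (hw : w ∈ closedBall 0 1) : u z = v w := by
  have h₁ : (1 : ℂ) ∈ closedBall 0 1 := by simp
  obtain ⟨a, ha⟩ := exists_eqOn_const_of_conj_reflection hu hv h
  obtain ⟨b, hb⟩ := exists_eqOn_const_of_conj_reflection hv hu fun z hz => by
    simpa using (h (conj z) (by simpa using hz)).symm
  have huv : u 1 = v 1 := by simpa using h 1 (by simp)
  rw [ha hz, hb hw, ← ha h₁, ← hb h₁, huv]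

theorem matrix_eq_of_conj_reflection {ι : Type*} {G H : ℂ → Matrix ι ι ℂ}
    (hG : ∀ i j, DiffContOnCl ℂ (fun z => G z i j) (ball 0 1))
    (hH : ∀ i j, DiffContOnCl ℂ (fun z => H z i j) (ball 0 1))
    (h : ∀ z ∈ sphere (0 : ℂ) 1, G (conj z) = H z)
    {z w : ℂ} (hz : z ∈ closedBall 0 1) (hw : w ∈ closedBall 0 1) : G z = H w :=
  Matrix.ext fun i j =>
    eq_of_conj_reflection (hG i j) (hH i j) (fun z hz => by rw [h z hz]) hz hw

theorem Matrix.inv_mul_eq_mul_inv_iff {ι R : Type*} [Fintype ι] [DecidableEq ι] [CommRing R]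
    {A A' P P' : Matrix ι ι R} (hA' : IsUnit A'.det) (hP : IsUnit P.det) :
    A'⁻¹ * A = P' * P⁻¹ ↔ A * P = A' * P' := by
  let _ := A'.invertibleOfIsUnitDet hA'
  let _ := P.invertibleOfIsUnitDet hP
  rw [Matrix.inv_mul_eq_iff_eq_mul_of_invertible, ← mul_assoc, eq_comm,
    Matrix.mul_inv_eq_iff_eq_mul_of_invertible, eq_comm]

namespace CanonicalFactorization

variable {n : ℕ} {f : ℂ → Matrix (Fin n) (Fin n) ℂ}

/-- The extension `fᵉ(z) = f₋ᵉ(z̄⁻¹) f₊ᵉ(z)` to the closed disk. -/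
def extension (c : CanonicalFactorization n f) (z : ℂ) : Matrix (Fin n) (Fin n) ℂ :=
  c.Fm (conj z) * c.Fp z

variable (c c' : CanonicalFactorization n f)

theorem diffContOnCl_Fm_apply (i j : Fin n) : DiffContOnCl ℂ (fun z => c.Fm z i j) (ball 0 1) :=
  .mk_ball (c.anal_m i j) ((continuous_apply_apply i j).comp_continuousOn c.contOn_m)

theorem diffContOnCl_Fp_apply (i j : Fin n) : DiffContOnCl ℂ (fun z => c.Fp z i j) (ball 0 1) :=
  .mk_ball (c.anal_p i j) ((continuous_apply_apply i j).comp_continuousOn c.contOn_p)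

theorem isUnit_det_Fm {z : ℂ} (hz : z ∈ closedBall (0 : ℂ) 1) : IsUnit (c.Fm z).det :=
  (Matrix.isUnit_iff_isUnit_det _).mp (c.unit_m z hz)

theorem isUnit_det_Fp {z : ℂ} (hz : z ∈ closedBall (0 : ℂ) 1) : IsUnit (c.Fp z).det :=
  (Matrix.isUnit_iff_isUnit_det _).mp (c.unit_p z hz)

theorem det_Fm_ne_zero {z : ℂ} (hz : z ∈ closure (ball 0 1)) : (c.Fm z).det ≠ 0 :=
  (c.isUnit_det_Fm (by rwa [closure_ball (0 : ℂ) one_ne_zero] at hz)).ne_zero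

theorem det_Fp_ne_zero {z : ℂ} (hz : z ∈ closure (ball 0 1)) : (c.Fp z).det ≠ 0 :=
  (c.isUnit_det_Fp (by rwa [closure_ball (0 : ℂ) one_ne_zero] at hz)).ne_zero

theorem extension_eq_of_mem_sphere {z : ℂ} (hz : z ∈ sphere (0 : ℂ) 1) : c.extension z = f z := by
  rw [extension, c.factor z hz, Complex.inv_eq_conj (by simpa using hz)]

theorem isUnit_extension {z : ℂ} (hz : z ∈ closedBall (0 : ℂ) 1) : IsUnit (c.extension z) :=
  (c.unit_m _ (by simpa using hz)).mul (c.unit_p z hz)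

/-- The transition matrix `B = (f₋')⁻¹ f₋ = f₊' f₊⁻¹` between two canonical factorizations is
constant, being holomorphic both inside and (after reflection) outside the circle. -/
theorem inv_Fm_mul_Fm_eq_Fp_mul_inv_Fp {z w : ℂ} (hz : z ∈ closedBall (0 : ℂ) 1)
    (hw : w ∈ closedBall (0 : ℂ) 1) : (c'.Fm z)⁻¹ * c.Fm z = c'.Fp w * (c.Fp w)⁻¹ := by
  refine matrix_eq_of_conj_reflection (G := fun z => (c'.Fm z)⁻¹ * c.Fm z)
    (H := fun w => c'.Fp w * (c.Fp w)⁻¹) (fun i j => ?_) (fun i j => ?_) (fun z hz => ?_) hz hw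
  · exact diffContOnCl_mul_apply (diffContOnCl_inv_apply c'.diffContOnCl_Fm_apply
      fun w hw => c'.det_Fm_ne_zero hw) c.diffContOnCl_Fm_apply i j
  · exact diffContOnCl_mul_apply c'.diffContOnCl_Fp_apply
      (diffContOnCl_inv_apply c.diffContOnCl_Fp_apply fun w hw => c.det_Fp_ne_zero hw) i j
  · have hz' := sphere_subset_closedBall hz
    refine (Matrix.inv_mul_eq_mul_inv_iff (c'.isUnit_det_Fm (by simpa using hz'))
      (c.isUnit_det_Fp hz')).mpr ?_
    simpa [extension] using
      (c.extension_eq_of_mem_sphere hz).trans (c'.extension_eq_of_mem_sphere hz).symm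

theorem extension_eq {z : ℂ} (hz : z ∈ closedBall (0 : ℂ) 1) : c.extension z = c'.extension z := by
  have hz' : conj z ∈ closedBall (0 : ℂ) 1 := by simpa using hz
  exact (Matrix.inv_mul_eq_mul_inv_iff (c'.isUnit_det_Fm hz') (c.isUnit_det_Fp hz)).mp
    (inv_Fm_mul_Fm_eq_Fp_mul_inv_Fp c c' hz' hz)

end CanonicalFactorization

theorem continuousOn_conj_mul {ι X : Type*} [Fintype ι] [TopologicalSpace X] {U : Set X}
    {Fm Fp : ℂ → X → Matrix ι ι ℂ}
    (hm : ContinuousOn (fun p : ℂ × X => Fm p.1 p.2) (closedBall 0 1 ×ˢ U))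
    (hp : ContinuousOn (fun p : ℂ × X => Fp p.1 p.2) (closedBall 0 1 ×ˢ U)) :
    ContinuousOn (fun p : closedBall (0 : ℂ) 1 × X => Fm (conj (p.1 : ℂ)) p.2 * Fp p.1 p.2)
      (univ ×ˢ U) := by
  have hincl : Continuous fun p : closedBall (0 : ℂ) 1 × X => ((p.1 : ℂ), p.2) := by fun_prop
  have hconj : Continuous fun p : closedBall (0 : ℂ) 1 × X => (conj (p.1 : ℂ), p.2) := by
    fun_prop
  refine (hm.comp hconj.continuousOn ?_).mul (hp.comp hincl.continuousOn ?_)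
  · rintro ⟨z, x⟩ ⟨-, hx⟩
    exact ⟨by simpa using mem_closedBall_zero_iff.mp z.2, hx⟩
  · rintro ⟨z, x⟩ ⟨-, hx⟩
    exact ⟨z.2, hx⟩

theorem family_extension_exists_unique_general {n : ℕ} (X : Type*) [TopologicalSpace X]
    (f : ℂ → X → Matrix (Fin n) (Fin n) ℂ)
    (hloc : ∀ x : X, ∃ U ∈ nhds x, ∃ Fm Fp : ℂ → X → Matrix (Fin n) (Fin n) ℂ,
      ContinuousOn (fun p : ℂ × X => Fm p.1 p.2) (closedBall 0 1 ×ˢ U) ∧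
      ContinuousOn (fun p : ℂ × X => Fp p.1 p.2) (closedBall 0 1 ×ˢ U) ∧
      ∀ x' ∈ U, ∃ c : CanonicalFactorization n (fun z => f z x'),
        c.Fm = (fun z => Fm z x') ∧ c.Fp = (fun z => Fp z x')) :
    ∃! fe : closedBall (0 : ℂ) 1 → X → Matrix (Fin n) (Fin n) ℂ,
      Continuous (fun p : closedBall (0 : ℂ) 1 × X => fe p.1 p.2) ∧
      (∀ z : closedBall (0 : ℂ) 1, (z : ℂ) ∈ sphere (0 : ℂ) 1 → ∀ x, fe z x = f z x) ∧
      (∀ z : closedBall (0 : ℂ) 1, ∀ x, IsUnit (fe z x)) ∧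
      (∀ (U : Set X) (Fm Fp : ℂ → X → Matrix (Fin n) (Fin n) ℂ),
        (∀ x' ∈ U, ∃ c : CanonicalFactorization n (fun z => f z x'),
          c.Fm = (fun z => Fm z x') ∧ c.Fp = (fun z => Fp z x')) →
        ∀ x' ∈ U, ∀ z : closedBall (0 : ℂ) 1,
          fe z x' = Fm (starRingEnd ℂ (z : ℂ)) x' * Fp (z : ℂ) x') := by
  have hcf (x : X) : Nonempty (CanonicalFactorization n fun z => f z x) := by
    obtain ⟨U, hU, _, _, -, -, hfac⟩ := hloc x
    exact ⟨(hfac x (mem_of_mem_nhds hU)).choose⟩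
  let fe (z : closedBall (0 : ℂ) 1) (x : X) := (hcf x).some.extension z
  have hform (U : Set X) (Fm Fp : ℂ → X → Matrix (Fin n) (Fin n) ℂ)
      (hfac : ∀ x' ∈ U, ∃ c : CanonicalFactorization n (fun z => f z x'),
        c.Fm = (fun z => Fm z x') ∧ c.Fp = (fun z => Fp z x'))
      (x : X) (hx : x ∈ U) (z : closedBall (0 : ℂ) 1) : fe z x = Fm (conj (z : ℂ)) x * Fp z x := by
    obtain ⟨c, hcm, hcp⟩ := hfac x hx
    exact ((hcf x).some.extension_eq c z.2).trans
      (by rw [CanonicalFactorization.extension, hcm, hcp])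
  refine ⟨fe, ⟨?_, fun z hz x => (hcf x).some.extension_eq_of_mem_sphere hz,
    fun z x => (hcf x).some.isUnit_extension z.2, hform⟩, ?_⟩
  · refine continuous_iff_continuousAt.2 fun ⟨z, x⟩ => ?_
    obtain ⟨U, hU, Fm, Fp, hm, hp, hfac⟩ := hloc x
    have hUnhds : univ ×ˢ U ∈ nhds (z, x) := prod_mem_nhds Filter.univ_mem hU
    exact ((continuousOn_conj_mul hm hp).continuousAt hUnhds).congr <|
      Filter.eventuallyEq_of_mem hUnhds fun p hp => (hform U Fm Fp hfac p.2 hp.2 p.1).symm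
  · rintro g ⟨-, -, -, hg⟩
    funext z x
    obtain ⟨U, hU, Fm, Fp, -, -, hfac⟩ := hloc x
    rw [hg U Fm Fp hfac x (mem_of_mem_nhds hU) z, hform U Fm Fp hfac x (mem_of_mem_nhds hU) z]

/-- Extension of families.  Let `X` be a topological space and `f : 𝕋 × X → GLₙ(ℂ)`
continuous, such that around each point of `X` the functions `f(·,x)` admit canonical
factorizations depending continuously on the parameter.  Then there is a unique continuous
invertible-valued map `fᵉ : 𝔻² × X → GLₙ(ℂ)` extending `f` which, on every neighborhood
carrying a continuous canonical factorization `f = f₋ f₊`, is given by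
`fᵉ(z,x) = f₋ᵉ(z̄⁻¹,x) f₊ᵉ(z,x)` (encoded as `Fm (conj z) x * Fp z x`). -/
theorem family_extension_exists_unique {n : ℕ} (X : Type*) [TopologicalSpace X]
    (f : ℂ → X → Matrix (Fin n) (Fin n) ℂ)
    (hf : ContinuousOn (fun p : ℂ × X => f p.1 p.2) (sphere 0 1 ×ˢ Set.univ))
    (hloc : ∀ x : X, ∃ U ∈ nhds x, ∃ Fm Fp : ℂ → X → Matrix (Fin n) (Fin n) ℂ,
      ContinuousOn (fun p : ℂ × X => Fm p.1 p.2) (closedBall 0 1 ×ˢ U) ∧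
      ContinuousOn (fun p : ℂ × X => Fp p.1 p.2) (closedBall 0 1 ×ˢ U) ∧
      ∀ x' ∈ U, ∃ c : CanonicalFactorization n (fun z => f z x'),
        c.Fm = (fun z => Fm z x') ∧ c.Fp = (fun z => Fp z x')) :
    ∃! fe : closedBall (0 : ℂ) 1 → X → Matrix (Fin n) (Fin n) ℂ,
      Continuous (fun p : closedBall (0 : ℂ) 1 × X => fe p.1 p.2) ∧
      (∀ z : closedBall (0 : ℂ) 1, (z : ℂ) ∈ sphere (0 : ℂ) 1 → ∀ x, fe z x = f z x) ∧
      (∀ z : closedBall (0 : ℂ) 1, ∀ x, IsUnit (fe z x)) ∧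
      (∀ (U : Set X) (Fm Fp : ℂ → X → Matrix (Fin n) (Fin n) ℂ),
        (∀ x' ∈ U, ∃ c : CanonicalFactorization n (fun z => f z x'),
          c.Fm = (fun z => Fm z x') ∧ c.Fp = (fun z => Fp z x')) →
        ∀ x' ∈ U, ∀ z : closedBall (0 : ℂ) 1,
          fe z x' = Fm (starRingEnd ℂ (z : ℂ)) x' * Fp (z : ℂ) x') :=
  family_extension_exists_unique_general X f hloc
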